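/- arXiv:2605.07956 — 3 statements merged into one kernel-verified Lean document; each statement's English description precedes it below -/
import Mathlib

section
/- Let f : R → S be a ring homomorphism of Noetherian rings and φ : M → N a homomorphism of finitely generated S-modules. If for every prime q of S that is maximal, letting p = q ∩ R, the induced map M ⊗_S (S ⊗_R κ(p)) → N ⊗_S (S ⊗_R κ(p)) is surjective, then φ is surjective. -/
open TensorProduct

/-- If `φ : M → N` is a map of finite modules over `S` (an `R`-algebra,
both Noetherian) which is surjective after base change to the fiber ring `S ⊗_R κ(p)`
for every maximal ideal `q` of `S` with `p = q ∩ R`, then `φ` is surjective. -/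
theorem stmt2 {R S : Type*} [CommRing R] [CommRing S] [IsNoetherianRing R]
    [IsNoetherianRing S] [Algebra R S]
    {M N : Type*} [AddCommGroup M] [AddCommGroup N] [Module S M] [Module S N]
    [Module.Finite S M] [Module.Finite S N] (φ : M →ₗ[S] N)
    (h : ∀ q : Ideal S, q.IsMaximal →
      ∀ (p : Ideal R), p = q.comap (algebraMap R S) → ∀ (_ : p.IsPrime),
      Function.Surjective
        (LinearMap.baseChange
          (S ⊗[R] IsLocalRing.ResidueField (Localization.AtPrime p)) φ)) :
    Function.Surjective φ := by
  classical
  set C := N ⧸ LinearMap.range φ with hCdef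
  let π : N →ₗ[S] C := (LinearMap.range φ).mkQ
  haveI : Module.Finite S C := Module.Finite.of_surjective π (Submodule.mkQ_surjective _)
  -- Key: for every maximal ideal `q` of `S`, `C = q • C`.
  have key : ∀ q : Ideal S, q.IsMaximal → (⊤ : Submodule S C) ≤ q • ⊤ := by
    intro q hq
    haveI := hq.isPrime
    set p : Ideal R := q.comap (algebraMap R S) with hpdef
    haveI hpp : p.IsPrime := Ideal.IsPrime.comap _
    set Rp := Localization.AtPrime p with hRp
    set κp := IsLocalRing.ResidueField Rp with hκp
    letI : Field (S ⧸ q) := Ideal.Quotient.field q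
    -- units condition for the localization lift
    have hunit : ∀ y : p.primeCompl, IsUnit (algebraMap R (S ⧸ q) y) := by
      intro y
      rw [isUnit_iff_ne_zero]
      intro h0
      apply y.2
      rw [IsScalarTower.algebraMap_apply R S (S ⧸ q), Ideal.Quotient.algebraMap_eq] at h0
      exact Ideal.mem_comap.mpr (Ideal.Quotient.eq_zero_iff_mem.mp h0)
    let ℓ : Rp →+* S ⧸ q := IsLocalization.lift (M := p.primeCompl) hunit
    have hker : ∀ x ∈ IsLocalRing.maximalIdeal Rp, ℓ x = 0 := by
      have hle : Ideal.map (algebraMap R Rp) p ≤ RingHom.ker ℓ := by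
        rw [Ideal.map_le_iff_le_comap]
        intro r hr
        simp only [Ideal.mem_comap, RingHom.mem_ker]
        rw [IsLocalization.lift_eq, IsScalarTower.algebraMap_apply R S (S ⧸ q)]
        exact Ideal.Quotient.eq_zero_iff_mem.mpr hr
      intro x hx
      rw [← Localization.AtPrime.map_eq_maximalIdeal] at hx
      exact hle hx
    haveI : IsLocalHom ℓ := by
      constructor
      intro x hx
      by_contra hxu
      rw [hker x hxu] at hx
      exact not_isUnit_zero hx
    -- the induced `R`-algebra map from the residue field to `S ⧸ q`
    let ρ : κp →ₐ[R] S ⧸ q :=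
      { IsLocalRing.ResidueField.lift ℓ with
        commutes' := fun r => by
          rw [IsScalarTower.algebraMap_apply R Rp κp]
          show IsLocalRing.ResidueField.lift ℓ
            (IsLocalRing.residue Rp (algebraMap R Rp r)) = algebraMap R (S ⧸ q) r
          rw [IsLocalRing.ResidueField.lift_residue_apply, IsLocalization.lift_eq] }
    let g : (S ⊗[R] κp) →ₐ[S] S ⧸ q :=
      Algebra.TensorProduct.lift (Algebra.ofId S (S ⧸ q)) ρ (fun _ _ => Commute.all _ _)
    let G : (S ⊗[R] κp) ⊗[S] N →ₗ[S] (S ⧸ q) ⊗[S] C :=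
      TensorProduct.map g.toLinearMap π
    have hG0 : ∀ y, G ((LinearMap.baseChange (S ⊗[R] κp) φ) y) = 0 := by
      intro y
      induction y using TensorProduct.induction_on with
      | zero => simp
      | tmul a m =>
        simp only [LinearMap.baseChange_tmul, G, TensorProduct.map_tmul]
        have hπ : π (φ m) = 0 := by
          rw [show π (φ m) = Submodule.Quotient.mk (φ m) from rfl,
            Submodule.Quotient.mk_eq_zero]
          exact LinearMap.mem_range_self φ m
        rw [hπ, tmul_zero]
      | add u v hu hv => rw [map_add, map_add, hu, hv, add_zero]
    rintro c -
    obtain ⟨n, rfl⟩ := Submodule.mkQ_surjective _ c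
    obtain ⟨y, hy⟩ := h q hq p rfl hpp ((1 : S ⊗[R] κp) ⊗ₜ[S] n)
    have h0 := hG0 y
    rw [hy] at h0
    have h1 : ((Ideal.Quotient.mk q 1) ⊗ₜ[S] (π n) : (S ⧸ q) ⊗[S] C) = 0 := by
      have : G ((1 : S ⊗[R] κp) ⊗ₜ[S] n) = (g 1) ⊗ₜ[S] (π n) := rfl
      rw [this] at h0
      rw [map_one] at h0
      simpa using h0
    have h2 := congrArg (TensorProduct.quotTensorEquivQuotSMul C q) h1
    rw [map_zero, TensorProduct.quotTensorEquivQuotSMul_mk_tmul, one_smul] at h2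
    have := (Submodule.Quotient.mk_eq_zero _).mp h2
    exact this
  -- Nakayama: conclude `C = 0`.
  have hC : ∀ c : C, c = 0 := by
    by_contra hne
    push_neg at hne
    obtain ⟨c, hc⟩ := hne
    have hann : Module.annihilator S C ≠ ⊤ := by
      intro ht
      have h1 : (1 : S) ∈ Module.annihilator S C := ht ▸ Submodule.mem_top
      have := Module.mem_annihilator.mp h1 c
      rw [one_smul] at this
      exact hc this
    obtain ⟨q, hq, hle⟩ := Ideal.exists_le_maximal _ hann
    obtain ⟨r, hr1, hr0⟩ :=
      Submodule.exists_sub_one_mem_and_smul_eq_zero_of_fg_of_le_smul q ⊤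
        (Module.Finite.fg_top (R := S) (M := C)) (key q hq)
    have hrann : r ∈ q := hle (Module.mem_annihilator.mpr fun m => hr0 m Submodule.mem_top)
    have : (1 : S) ∈ q := by
      have := q.sub_mem hrann hr1
      simpa using this
    exact hq.ne_top (Ideal.eq_top_iff_one q |>.mpr this)
  intro n
  have := hC (π n)
  rw [show π n = Submodule.Quotient.mk n from rfl, Submodule.Quotient.mk_eq_zero] at this
  exact this
end

section
/- Let R → S be a ring map of Noetherian rings, let p be a prime of R and q a prime of S lying over p. Let φ : M → N be a map of finitely generated S-modules whose base change to the fiber ring S ⊗_R κ(p) is surjective. Then there exists s ∈ S with s ∈ (image of R \ p) + pS and s ∉ q such that φ_s : M_s → N_s is surjective. -/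
open TensorProduct

/-- Auxiliary: if `1 ⊗ c` lies in `m • ⊤` in `R_p ⊗ C`, then `r • c ∈ p • C`
for some `r ∉ p`. -/
lemma stmt3_aux_local {R : Type*} [CommRing R] (p : Ideal R) [p.IsPrime]
    {C : Type*} [AddCommGroup C] [Module R C] (c : C)
    (hc : (1 : Localization.AtPrime p) ⊗ₜ[R] c ∈
      (IsLocalRing.maximalIdeal (Localization.AtPrime p)) •
        (⊤ : Submodule (Localization.AtPrime p) (Localization.AtPrime p ⊗[R] C))) :
    ∃ r ∉ p, r • c ∈ p • (⊤ : Submodule R C) := by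
  set Rp := Localization.AtPrime p
  let f : C →ₗ[R] Rp ⊗[R] C := (TensorProduct.mk R Rp C) 1
  haveI : IsLocalizedModule p.primeCompl f :=
    (isLocalizedModule_iff_isBaseChange p.primeCompl Rp f).mpr
      (TensorProduct.isBaseChange R C Rp)
  set L : Submodule Rp (Rp ⊗[R] C) :=
    (p • (⊤ : Submodule R C)).localized' Rp p.primeCompl f with hL
  have key : ∀ x ∈ Ideal.map (algebraMap R Rp) p, ∀ y : Rp ⊗[R] C, x • y ∈ L := by
    intro x hx
    refine Submodule.span_induction ?_ ?_ ?_ ?_ hx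
    · rintro x ⟨r, hr, rfl⟩ y
      obtain ⟨⟨v, t⟩, hv⟩ := IsLocalizedModule.surj p.primeCompl f y
      refine (Submodule.mem_localized' _ _ _ _ _).mpr
        ⟨r • v, Submodule.smul_mem_smul hr Submodule.mem_top, t, ?_⟩
      simp only at hv
      rw [IsLocalizedModule.mk'_eq_iff, map_smul, ← hv]
      rw [Submonoid.smul_def, Submonoid.smul_def, algebraMap_smul]
      exact smul_comm _ _ _
    · intro y; rw [zero_smul]; exact L.zero_mem
    · intro x x' _ _ hx hx' y
      rw [add_smul]; exact L.add_mem (hx y) (hx' y)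
    · intro a x _ hx y
      rw [smul_eq_mul, mul_comm, mul_smul]
      exact hx (a • y)
  have hle : (IsLocalRing.maximalIdeal Rp) •
      (⊤ : Submodule Rp (Rp ⊗[R] C)) ≤ L := by
    rw [← Localization.AtPrime.map_eq_maximalIdeal]
    exact Submodule.smul_le.2 fun x hx y _ => key x hx y
  have hc' := hle hc
  rw [Submodule.mem_localized'] at hc'
  obtain ⟨v, hv, t, ht⟩ := hc'
  have hfc : f c = (1 : Rp) ⊗ₜ[R] c := rfl
  rw [← hfc, ← IsLocalizedModule.mk'_one p.primeCompl f,
    IsLocalizedModule.mk'_eq_mk'_iff] at ht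
  obtain ⟨u, hu⟩ := ht
  refine ⟨(u * t : p.primeCompl), (u * t).2, ?_⟩
  have : ((u * t : p.primeCompl) : R) • c = u • (t • c) := by
    rw [Submonoid.coe_mul, mul_smul]; rfl
  rw [this]
  have hu' : u • t • c = u • (1 : p.primeCompl) • v := hu
  rw [hu', one_smul]
  exact Submodule.smul_mem _ _ hv

/-- Auxiliary: Cayley–Hamilton style determinant trick. -/
lemma stmt3_aux_CH {S : Type*} [CommRing S] {C : Type*} [AddCommGroup C] [Module S C]
    [Module.Finite S C] (I : Ideal S) (u : S)
    (hu : ∀ c : C, u • c ∈ I • (⊤ : Submodule S C)) :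
    ∃ n : ℕ, ∃ y ∈ I, ∀ c : C, (u ^ n + y) • c = 0 := by
  have hrange : LinearMap.range (algebraMap S (Module.End S C) u) ≤
      I • (⊤ : Submodule S C) := by
    rintro x ⟨c, rfl⟩
    rw [Module.algebraMap_end_apply]
    exact hu c
  obtain ⟨P, hmonic, -, hcoeff, heval⟩ :=
    LinearMap.exists_monic_and_coeff_mem_pow_and_aeval_eq_zero_of_range_le_smul S
      (algebraMap S (Module.End S C) u) I hrange
  refine ⟨P.natDegree, ∑ i ∈ Finset.range P.natDegree, P.coeff i * u ^ i, ?_, ?_⟩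
  · refine Ideal.sum_mem _ fun i hi => Ideal.mul_mem_right _ _ ?_
    exact Ideal.pow_le_self (Nat.sub_ne_zero_of_lt (Finset.mem_range.1 hi)) (hcoeff i)
  · intro c
    have h1 : Polynomial.aeval (algebraMap S (Module.End S C) u) P
        = algebraMap S (Module.End S C) (P.eval u) :=
      Polynomial.aeval_algebraMap_apply_eq_algebraMap_eval u P
    have h2 : P.eval u = u ^ P.natDegree +
        ∑ i ∈ Finset.range P.natDegree, P.coeff i * u ^ i := by
      rw [Polynomial.eval_eq_sum_range, Finset.sum_range_succ,
        hmonic.coeff_natDegree, one_mul, add_comm]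
    have h3 : algebraMap S (Module.End S C)
        (u ^ P.natDegree + ∑ i ∈ Finset.range P.natDegree, P.coeff i * u ^ i) = 0 := by
      rw [← h2, ← h1, heval]
    calc (u ^ P.natDegree + ∑ i ∈ Finset.range P.natDegree, P.coeff i * u ^ i) • c
        = algebraMap S (Module.End S C)
            (u ^ P.natDegree + ∑ i ∈ Finset.range P.natDegree, P.coeff i * u ^ i) c := by
          rw [Module.algebraMap_end_apply]
      _ = 0 := by rw [h3]; rfl

set_option maxHeartbeats 1000000 in
/-- If `φ : M → N` (finite `S`-modules, `R → S` Noetherian) becomes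
surjective after base change to the fiber ring over a prime `p` of `R`, and `q` is a
prime of `S` lying over `p`, then there is `s ∈ (image of R \ p) + pS`, `s ∉ q`, with
`M_s → N_s` surjective. -/
theorem stmt3 {R S : Type*} [CommRing R] [CommRing S] [IsNoetherianRing R]
    [IsNoetherianRing S] [Algebra R S]
    (p : Ideal R) [p.IsPrime] (q : Ideal S) [q.IsPrime]
    (hq : q.comap (algebraMap R S) = p)
    {M N : Type*} [AddCommGroup M] [AddCommGroup N] [Module S M] [Module S N]
    [Module.Finite S M] [Module.Finite S N] (φ : M →ₗ[S] N)
    (h : Function.Surjective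
      (LinearMap.baseChange
        (TensorProduct R S (IsLocalRing.ResidueField (Localization.AtPrime p))) φ)) :
    ∃ s : S,
      (∃ x ∉ p, ∃ y ∈ p.map (algebraMap R S), s = algebraMap R S x + y) ∧
      s ∉ q ∧
      Function.Surjective
        (IsLocalizedModule.map (Submonoid.powers s)
          (LocalizedModule.mkLinearMap (Submonoid.powers s) M)
          (LocalizedModule.mkLinearMap (Submonoid.powers s) N) φ) := by
  classical
  set κ := IsLocalRing.ResidueField (Localization.AtPrime p) with hκ
  set T := TensorProduct R S κ with hT
  set Rp := Localization.AtPrime p with hRp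
  set C := N ⧸ LinearMap.range φ with hC
  set π : N →ₗ[S] C := (LinearMap.range φ).mkQ with hπdef
  -- Step 1: T ⊗[S] C is trivial
  have hπT : Function.Surjective (LinearMap.baseChange T π) := by
    rw [LinearMap.baseChange_eq_ltensor]
    exact LinearMap.lTensor_surjective T (Submodule.mkQ_surjective _)
  have hπφ : π ∘ₗ φ = (0 : M →ₗ[S] C) := by
    ext m
    exact (Submodule.Quotient.mk_eq_zero _).mpr ⟨m, rfl⟩
  have hcomp : (LinearMap.baseChange T π) ∘ₗ (LinearMap.baseChange T φ) = 0 := by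
    rw [← LinearMap.baseChange_comp, hπφ, LinearMap.baseChange_zero]
  have hTC : ∀ z : T ⊗[S] C, z = 0 := by
    intro z
    obtain ⟨w, rfl⟩ := hπT z
    obtain ⟨x, rfl⟩ := h w
    have := LinearMap.congr_fun hcomp x
    simpa using this
  haveI hs1 : Subsingleton (T ⊗[S] C) := subsingleton_of_forall_eq 0 hTC
  -- R-module structure on C
  letI : Module R C := Module.compHom C (algebraMap R S)
  haveI : IsScalarTower R S C := IsScalarTower.of_algebraMap_smul fun r x => rfl
  -- Step 2: transfer subsingleton
  haveI sA : Subsingleton (C ⊗[S] T) :=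
    ((TensorProduct.comm S T C).symm.toEquiv).subsingleton
  haveI sB : Subsingleton (C ⊗[R] κ) :=
    ((TensorProduct.AlgebraTensorModule.cancelBaseChange R S S C κ).symm.toEquiv).subsingleton
  haveI sC : Subsingleton (κ ⊗[Rp] (Rp ⊗[R] C)) :=
    (((TensorProduct.AlgebraTensorModule.cancelBaseChange R Rp Rp κ C).toEquiv).trans
      ((TensorProduct.comm R C κ).symm.toEquiv)).subsingleton
  haveI sD : Subsingleton ((Rp ⧸ IsLocalRing.maximalIdeal Rp) ⊗[Rp] (Rp ⊗[R] C)) := sC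
  haveI sE : Subsingleton ((Rp ⊗[R] C) ⧸
      (IsLocalRing.maximalIdeal Rp) • (⊤ : Submodule Rp (Rp ⊗[R] C))) :=
    ((quotTensorEquivQuotSMul (Rp ⊗[R] C) (IsLocalRing.maximalIdeal Rp)).symm.toEquiv).subsingleton
  have hmem : ∀ c : C, (1 : Rp) ⊗ₜ[R] c ∈
      (IsLocalRing.maximalIdeal Rp) • (⊤ : Submodule Rp (Rp ⊗[R] C)) := by
    intro c
    have : (Submodule.Quotient.mk ((1 : Rp) ⊗ₜ[R] c) :
        (Rp ⊗[R] C) ⧸ (IsLocalRing.maximalIdeal Rp) • (⊤ : Submodule Rp (Rp ⊗[R] C))) = 0 :=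
      Subsingleton.elim _ _
    exact (Submodule.Quotient.mk_eq_zero _).1 this
  -- Step 3: find r_i for generators
  have hCc : ∀ c : C, ∃ r ∉ p, r • c ∈ p • (⊤ : Submodule R C) :=
    fun c => stmt3_aux_local p c (hmem c)
  obtain ⟨nn, g, hg⟩ := Module.Finite.exists_fin (R := S) (M := C)
  choose r hr hrmem using fun i => hCc (g i)
  set u0 : R := ∏ i, r i with hu0
  have hu0p : u0 ∉ p := by
    intro hc
    obtain ⟨i, _, hi⟩ := Ideal.IsPrime.prod_mem_iff.1 hc
    exact hr i hi
  -- Step 4: u0 • C ⊆ pS • C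
  set K : Submodule S C := (p.map (algebraMap R S)) • (⊤ : Submodule S C) with hK
  have hpK : p • (⊤ : Submodule R C) ≤ K.restrictScalars R := by
    refine Submodule.smul_le.2 fun a ha c _ => ?_
    have : a • c = algebraMap R S a • c := rfl
    rw [Submodule.restrictScalars_mem, this]
    exact Submodule.smul_mem_smul (Ideal.mem_map_of_mem _ ha) Submodule.mem_top
  have hgen : ∀ i, algebraMap R S u0 • g i ∈ K := by
    intro i
    have h1 : algebraMap R S u0 • g i = u0 • g i := algebraMap_smul S u0 (g i)
    have h2 : u0 • g i = (∏ j ∈ Finset.univ.erase i, r j) • (r i • g i) := by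
      rw [← mul_smul, mul_comm, Finset.mul_prod_erase Finset.univ r (Finset.mem_univ i)]
    rw [h1, h2]
    exact hpK (Submodule.smul_mem _ _ (hrmem i))
  have hu : ∀ c : C, algebraMap R S u0 • c ∈ K := by
    have : ∀ c ∈ Submodule.span S (Set.range g), algebraMap R S u0 • c ∈ K := by
      intro c hc
      induction hc using Submodule.span_induction with
      | mem x hx => obtain ⟨i, rfl⟩ := hx; exact hgen i
      | zero => rw [smul_zero]; exact K.zero_mem
      | add x y _ _ hx hy => rw [smul_add]; exact K.add_mem hx hy
      | smul s x _ hx => rw [smul_comm]; exact K.smul_mem s hx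
    intro c
    exact this c (hg ▸ Submodule.mem_top)
  -- Step 5: Cayley-Hamilton
  obtain ⟨n, y, hy, hann⟩ := stmt3_aux_CH (p.map (algebraMap R S)) (algebraMap R S u0) hu
  set s : S := algebraMap R S (u0 ^ n) + y with hs
  have hann' : ∀ c : C, s • c = 0 := by
    intro c
    have : s = algebraMap R S u0 ^ n + y := by rw [hs, map_pow]
    rw [this]
    exact hann c
  have hxp : u0 ^ n ∉ p := fun hc => hu0p (‹p.IsPrime›.mem_of_pow_mem _ hc)
  have hsq : s ∉ q := by
    intro hsq
    have hyq : y ∈ q := Ideal.map_le_iff_le_comap.mpr (le_of_eq hq.symm) hy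
    have : algebraMap R S (u0 ^ n) ∈ q := by
      have := q.sub_mem hsq hyq
      simpa [hs] using this
    exact hxp (hq ▸ Ideal.mem_comap.mpr this)
  refine ⟨s, ⟨u0 ^ n, hxp, y, hy, rfl⟩, hsq, ?_⟩
  -- Step 6: surjectivity after inverting s
  intro z
  induction z using LocalizedModule.induction_on with
  | h nN t =>
    have hz : π (s • nN) = 0 := by rw [map_smul]; exact hann' (π nN)
    have hmem2 : s • nN ∈ LinearMap.range φ := (Submodule.Quotient.mk_eq_zero _).1 hz
    obtain ⟨m, hm⟩ := hmem2
    refine ⟨LocalizedModule.mk m (⟨s, Submonoid.mem_powers s⟩ * t), ?_⟩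
    rw [IsLocalizedModule.mk_eq_mk', IsLocalizedModule.mk_eq_mk',
      IsLocalizedModule.map_mk']
    have hm' : φ m = (⟨s, Submonoid.mem_powers s⟩ : Submonoid.powers s) • nN := hm
    rw [hm']
    exact IsLocalizedModule.mk'_cancel_left _ _ _ _
end

section
/- Let f : R → S be a flat ring map of Noetherian rings such that for every minimal prime p of R the fiber ring S ⊗_R κ(p) is reduced, and R is reduced. If moreover all fibers of f are reduced at minimal primes (i.e., S ⊗_R κ(p) satisfies (R_0) for minimal p), then S satisfies (R_0): the localization of S at each of its minimal primes is a field. -/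
open TensorProduct

/-- Localization of a reduced ring is reduced (universe polymorphic). -/
theorem aux_isReduced_of_isLocalization {R : Type*} {S : Type*} [CommRing R] [CommRing S]
    [Algebra R S] (M : Submonoid R) [IsLocalization M S] [IsReduced R] : IsReduced S := by
  constructor
  rintro x ⟨_ | n, e⟩
  · simpa using congr_arg (· * x) e
  obtain ⟨⟨y, m⟩, hx⟩ := IsLocalization.surj M x
  dsimp only at hx
  let hx' := congr_arg (· ^ n.succ) hx
  simp only [mul_pow, e, zero_mul, ← RingHom.map_pow] at hx'
  rw [← (algebraMap R S).map_zero] at hx'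
  obtain ⟨m', hm'⟩ := (IsLocalization.eq_iff_exists M S).mp hx'
  apply_fun (· * (m' : R) ^ n) at hm'
  simp only [mul_assoc, zero_mul, mul_zero] at hm'
  rw [← mul_left_comm, ← pow_succ', ← mul_pow] at hm'
  replace hm' := IsNilpotent.eq_zero ⟨_, hm'.symm⟩
  rw [← (IsLocalization.map_units S m).mul_left_inj, hx, zero_mul,
    IsLocalization.map_eq_zero_iff M]
  exact ⟨m', by rw [← hm', mul_comm]⟩

/-- Flat torsion-freeness modulo a prime: if `x * r ∈ p → r ∈ p` in `R`, then
multiplication by `x` is "injective" mod `p S`. -/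
theorem aux_flat_mod {R : Type*} {S : Type*} [CommRing R] [CommRing S] [Algebra R S]
    [Module.Flat R S] (p : Ideal R) (x : R) (hx : ∀ r, x * r ∈ p → r ∈ p) (s : S)
    (hs : algebraMap R S x * s ∈ p.map (algebraMap R S)) : s ∈ p.map (algebraMap R S) := by
  have hinjR : Function.Injective (LinearMap.lsmul R (R ⧸ p) x) := by
    intro a b hab
    obtain ⟨a, rfl⟩ := Submodule.Quotient.mk_surjective _ a
    obtain ⟨b, rfl⟩ := Submodule.Quotient.mk_surjective _ b
    simp only [LinearMap.lsmul_apply, ← Submodule.Quotient.mk_smul] at hab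
    rw [Submodule.Quotient.eq] at hab ⊢
    have : x * (a - b) ∈ p := by simpa [smul_eq_mul, smul_sub, mul_sub] using hab
    exact hx _ this
  have hinjT : Function.Injective
      (LinearMap.lTensor S (LinearMap.lsmul R (R ⧸ p) x)) :=
    Module.Flat.lTensor_preserves_injective_linearMap _ hinjR
  have hkey : Function.Injective (fun z : S ⧸ (p • ⊤ : Submodule R S) => x • z) := by
    have e := TensorProduct.tensorQuotEquivQuotSMul S p
    intro a b hab
    have hab : e.symm (x • a) = e.symm (x • b) := congrArg e.symm hab
    have h1 : ∀ z : S ⧸ (p • ⊤ : Submodule R S),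
        e.symm (x • z) = LinearMap.lTensor S (LinearMap.lsmul R (R ⧸ p) x) (e.symm z) := by
      intro z
      rw [map_smul]
      induction e.symm z using TensorProduct.induction_on with
      | zero => simp
      | tmul s r =>
        rw [LinearMap.lTensor_tmul, LinearMap.lsmul_apply, TensorProduct.tmul_smul]
      | add u v hu hv => simp [hu, hv, smul_add]
    rw [h1, h1] at hab
    exact e.symm.injective (hinjT hab)
  have hmem : ∀ t : S, t ∈ p.map (algebraMap R S) ↔ t ∈ (p • ⊤ : Submodule R S) := by
    intro t
    rw [Ideal.smul_top_eq_map]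
    rfl
  have h0 : x • (Submodule.Quotient.mk s : S ⧸ (p • ⊤ : Submodule R S)) = 0 := by
    rw [← Submodule.Quotient.mk_smul, Submodule.Quotient.mk_eq_zero]
    rw [← hmem]
    simpa [Algebra.smul_def] using hs
  have h2 : (Submodule.Quotient.mk s : S ⧸ (p • ⊤ : Submodule R S)) = 0 :=
    hkey (by simpa using h0)
  rw [hmem]
  simpa [Submodule.Quotient.mk_eq_zero] using h2

/-- Powers version of `aux_flat_mod`. -/
theorem aux_flat_mod_pow {R : Type*} {S : Type*} [CommRing R] [CommRing S] [Algebra R S]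
    [Module.Flat R S] (p : Ideal R) (x : R) (hx : ∀ r, x * r ∈ p → r ∈ p) (s : S) (n : ℕ)
    (hs : s * (algebraMap R S x) ^ n ∈ p.map (algebraMap R S)) : s ∈ p.map (algebraMap R S) := by
  induction n with
  | zero => simpa using hs
  | succ n ih =>
    apply ih
    apply aux_flat_mod p x hx
    have heq : (algebraMap R S x) * (s * (algebraMap R S x) ^ n)
        = s * (algebraMap R S x) ^ (n + 1) := by ring
    rw [heq]
    exact hs

/-- Under a flat map, the contraction of a minimal prime is a minimal prime. -/
theorem aux_comap_minimal {R : Type*} {S : Type*} [CommRing R] [CommRing S] [Algebra R S]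
    [Module.Flat R S] {q : Ideal S} (hq : q ∈ minimalPrimes S) :
    q.comap (algebraMap R S) ∈ minimalPrimes R := by
  haveI hqp : q.IsPrime := hq.1.1
  set p := q.comap (algebraMap R S) with hp_def
  haveI : p.IsPrime := Ideal.IsPrime.comap _
  obtain ⟨p₀, hp₀, hp₀le⟩ := Ideal.exists_minimalPrimes_le (I := (⊥ : Ideal R)) (J := p) bot_le
  haveI hp₀p : p₀.IsPrime := hp₀.1.1
  suffices h : p = p₀ by rw [h]; exact hp₀
  refine le_antisymm ?_ hp₀le
  intro x hxp
  by_contra hxp₀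
  -- work in T = S / p₀ S
  set I : Ideal S := p₀.map (algebraMap R S) with hI_def
  have hIq : I ≤ q := Ideal.map_le_iff_le_comap.mpr hp₀le
  set T := S ⧸ I
  set π : S →+* T := Ideal.Quotient.mk I with hπ_def
  have hπsurj : Function.Surjective π := Ideal.Quotient.mk_surjective
  set q' : Ideal T := q.map π with hq'_def
  have hker : RingHom.ker π ≤ q := by rw [hπ_def, Ideal.mk_ker]; exact hIq
  haveI hq'p : q'.IsPrime := Ideal.map_isPrime_of_surjective hπsurj hker
  have hcomap : q'.comap π = q := by
    rw [hq'_def, Ideal.comap_map_of_surjective π hπsurj, ← RingHom.ker_eq_comap_bot,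
      hπ_def, Ideal.mk_ker, sup_eq_left.mpr hIq]
  have hq'min : q' ∈ minimalPrimes T := by
    constructor
    · exact ⟨hq'p, bot_le⟩
    · rintro J ⟨hJp, -⟩ hJle
      have h1 : J.comap π ≤ q := hcomap ▸ Ideal.comap_mono hJle
      haveI : (J.comap π).IsPrime := Ideal.IsPrime.comap _
      have h2 : q ≤ J.comap π := hq.2 ⟨inferInstance, bot_le⟩ h1
      have h3 : q = J.comap π := le_antisymm h2 h1
      have h4 : q' = J := by
        rw [hq'_def, h3, Ideal.map_comap_of_surjective π hπsurj J]
      exact h4.le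
  -- x maps into q'
  have hxq' : π (algebraMap R S x) ∈ q' := Ideal.mem_map_of_mem π hxp
  -- localize T at q'
  have hnil : IsNilpotent (algebraMap T (Localization.AtPrime q') (π (algebraMap R S x))) := by
    rw [(haveI := Ring.KrullDimLE.of_isLocalization _ hq'min (Localization.AtPrime q'); Ring.KrullDimLE.isNilpotent_iff_mem_maximalIdeal)]
    exact (IsLocalization.AtPrime.to_map_mem_maximal_iff _ q' _).mpr hxq'
  obtain ⟨n, hn⟩ := hnil
  rw [← map_pow] at hn
  obtain ⟨⟨u, hu⟩, hun⟩ := (IsLocalization.map_eq_zero_iff q'.primeCompl _ _).mp hn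
  obtain ⟨t, rfl⟩ := hπsurj u
  have htmem : t * (algebraMap R S x) ^ n ∈ I := by
    rw [← Ideal.Quotient.eq_zero_iff_mem]
    rw [map_mul, map_pow]; exact hun
  have hx' : ∀ r, x * r ∈ p₀ → r ∈ p₀ := fun r hr =>
    (hp₀p.mem_or_mem hr).resolve_left hxp₀
  have : t ∈ I := aux_flat_mod_pow p₀ x hx' t n htmem
  have : π t = 0 := Ideal.Quotient.eq_zero_iff_mem.mpr this
  exact hu (this ▸ q'.zero_mem : π t ∈ q')

/-- Localization of a reduced ring at a minimal prime has trivial maximal ideal. -/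
theorem aux_maximalIdeal_eq_bot {R : Type*} [CommRing R] [IsReduced R] {p : Ideal R}
    [p.IsPrime] (hp : p ∈ minimalPrimes R) :
    IsLocalRing.maximalIdeal (Localization.AtPrime p) = ⊥ := by
  haveI : IsReduced (Localization.AtPrime p) :=
    aux_isReduced_of_isLocalization p.primeCompl
  ext x
  simp only [Ideal.mem_bot]
  rw [← (haveI := Ring.KrullDimLE.of_isLocalization _ hp (Localization.AtPrime p); Ring.KrullDimLE.isNilpotent_iff_mem_maximalIdeal)]
  exact ⟨fun h => h.eq_zero, fun h => h ▸ IsNilpotent.zero⟩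


/-- Let `R → S` be flat with `R`, `S` Noetherian and `R` reduced. If for
every minimal prime `p` of `R` the fiber ring `S ⊗_R κ(p)` is reduced and satisfies
`(R_0)` (its localizations at minimal primes are fields), then `S` satisfies `(R_0)`:
the localization of `S` at each of its minimal primes is a field. -/
theorem stmt8 {R S : Type*} [CommRing R] [CommRing S] [IsNoetherianRing R]
    [IsNoetherianRing S] [Algebra R S] [Module.Flat R S] [IsReduced R]
    (hred : ∀ p ∈ minimalPrimes R, ∀ (_ : p.IsPrime),
      IsReduced (S ⊗[R] IsLocalRing.ResidueField (Localization.AtPrime p)))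
    (hR0 : ∀ p ∈ minimalPrimes R, ∀ (_ : p.IsPrime),
      ∀ Q ∈ minimalPrimes (S ⊗[R] IsLocalRing.ResidueField (Localization.AtPrime p)),
        ∀ (_ : Q.IsPrime), IsField (Localization.AtPrime Q)) :
    ∀ q ∈ minimalPrimes S, ∀ (_ : q.IsPrime), IsField (Localization.AtPrime q) := by
  intro q hq hqp
  haveI := hqp
  set p := q.comap (algebraMap R S) with hp_def
  have hp : p ∈ minimalPrimes R := aux_comap_minimal hq
  haveI hpp : p.IsPrime := hp.1.1
  set κ := IsLocalRing.ResidueField (Localization.AtPrime p) with hκ_def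
  have hbot := aux_maximalIdeal_eq_bot hp
  have hbij : Function.Bijective (algebraMap (Localization.AtPrime p) κ) := by
    constructor
    · rw [RingHom.injective_iff_ker_eq_bot, IsLocalRing.ResidueField.algebraMap_eq,
        IsLocalRing.ker_residue]
      exact hbot
    · exact Ideal.Quotient.mk_surjective
  let e : Localization.AtPrime p ≃ₐ[R] κ :=
    AlgEquiv.ofBijective (IsScalarTower.toAlgHom R (Localization.AtPrime p) κ) hbij
  haveI : IsLocalization.AtPrime κ p :=
    IsLocalization.isLocalization_of_algEquiv p.primeCompl e
  letI : Algebra κ (S ⊗[R] κ) := Algebra.TensorProduct.rightAlgebra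
  haveI : IsScalarTower R κ (S ⊗[R] κ) := Algebra.TensorProduct.right_isScalarTower
  haveI : IsLocalization (Algebra.algebraMapSubmonoid S p.primeCompl) (S ⊗[R] κ) := by
    rw [← isLocalizedModule_iff_isLocalization,
      isLocalizedModule_iff_isBaseChange (S := p.primeCompl) (A := κ)]
    exact Algebra.IsPushout.out
  haveI hFred : IsReduced (S ⊗[R] κ) := hred p hp hpp
  have hle : Algebra.algebraMapSubmonoid S p.primeCompl ≤ q.primeCompl := by
    rintro _ ⟨t, ht, rfl⟩
    intro hmem
    exact ht hmem
  letI : Algebra (S ⊗[R] κ) (Localization.AtPrime q) :=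
    IsLocalization.localizationAlgebraOfSubmonoidLe _ _
      (Algebra.algebraMapSubmonoid S p.primeCompl) q.primeCompl hle
  haveI : IsScalarTower S (S ⊗[R] κ) (Localization.AtPrime q) :=
    IsLocalization.localization_isScalarTower_of_submonoid_le _ _ _ _ hle
  haveI : IsLocalization (q.primeCompl.map (algebraMap S (S ⊗[R] κ)))
      (Localization.AtPrime q) :=
    IsLocalization.isLocalization_of_submonoid_le _ _ _ _ hle
  haveI : IsReduced (Localization.AtPrime q) :=
    aux_isReduced_of_isLocalization (q.primeCompl.map (algebraMap S (S ⊗[R] κ)))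
  rw [IsLocalRing.isField_iff_maximalIdeal_eq]
  ext x
  simp only [Ideal.mem_bot]
  rw [← (haveI := Ring.KrullDimLE.of_isLocalization _ hq (Localization.AtPrime q); Ring.KrullDimLE.isNilpotent_iff_mem_maximalIdeal)]
  exact ⟨fun h => h.eq_zero, fun h => h ▸ IsNilpotent.zero⟩
end
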